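/- arXiv:2507.17954 — 4 statements merged into one kernel-verified Lean document; each statement's English description precedes it below -/
import Mathlib

section
/- Let p ≥ 1 be an integer, n ∈ ℤ, t ∈ ℝ, and R > 1. Then (1/2πi) ∮_{|w|=R} e^{t(w−1)} (w−1)^{−p} w^{−(n−p+1)} dw = e^{−t} ∑_{k=0}^∞ binom(k+p−1, p−1) · t^{k+n}/(k+n)!, where terms with k + n < 0 are interpreted as 0, and the series on the right converges absolutely. -/
/-!
For `|w| > 1` write the integrand as `e^{-t} · e^{tw} (1 - 1/w)^{-p} w^{-n-1}` and expand
`e^{tw} = ∑_j t^j w^j / j!` and `(1 - 1/w)^{-p} = ∑_k binom(k+p-1, p-1) w^{-k}`. The resulting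
double series converges absolutely and uniformly on `|w| = R`, so it may be integrated termwise;
`∮ w^m dw` vanishes unless `m = -1`, which leaves exactly the terms with `j = k + n`.
-/

open Complex Metric Filter

theorem circleIntegral.hasSum_integral_of_norm_le {E : Type*} [NormedAddCommGroup E]
    [NormedSpace ℂ E] {ι : Type*} [Countable ι] {F : ι → ℂ → E} {f : ℂ → E} {c : ℂ} {R : ℝ}
    {M : ι → ℝ} (hF : ∀ i, CircleIntegrable (F i) c R) (hM : Summable M)
    (hFM : ∀ i, ∀ z ∈ sphere c |R|, ‖F i z‖ ≤ M i)
    (hf : ∀ z ∈ sphere c |R|, HasSum (fun i => F i z) (f z)) :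
    HasSum (fun i => ∮ z in C(c, R), F i z) (∮ z in C(c, R), f z) := by
  refine intervalIntegral.hasSum_integral_of_dominated_convergence (fun i _ => |R| * M i)
    (fun i => ?_) (fun i => ?_) ?_ intervalIntegrable_const ?_
  · simp only [deriv_circleMap]
    exact ((continuous_circleMap 0 R).mul continuous_const).aestronglyMeasurable.smul
      (hF i).def'.1
  · refine Eventually.of_forall fun θ _ => ?_
    rw [norm_smul, deriv_circleMap, norm_mul, norm_I, mul_one, norm_circleMap_zero]
    exact mul_le_mul_of_nonneg_left (hFM i _ (circleMap_mem_sphere' c R θ)) (abs_nonneg R)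
  · exact Eventually.of_forall fun _ _ => hM.mul_left _
  · exact Eventually.of_forall fun θ _ => (hf _ (circleMap_mem_sphere' c R θ)).const_smul _

theorem circleIntegral_zpow {R : ℝ} (hR : R ≠ 0) (m : ℤ) :
    (∮ z in C(0, R), z ^ m) = if m = -1 then 2 * Real.pi * I else 0 := by
  split_ifs with hm
  · simpa [hm, zpow_neg_one] using circleIntegral.integral_sub_center_inv 0 hR
  · simpa using circleIntegral.integral_sub_zpow_of_ne hm 0 0 R

noncomputable def schuetzCoeff {K : Type*} [Field K] (p : ℕ) (n : ℤ) (t : K) (k : ℕ) : K :=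
  if 0 ≤ (k : ℤ) + n then
    ((k + p - 1).choose (p - 1) : K) * t ^ ((k : ℤ) + n).toNat /
      (((k : ℤ) + n).toNat.factorial : K)
  else 0

theorem map_schuetzCoeff {K L : Type*} [Field K] [Field L] (f : K →+* L) (p : ℕ) (n : ℤ) (t : K)
    (k : ℕ) : f (schuetzCoeff p n t k) = schuetzCoeff p n (f t) k := by
  unfold schuetzCoeff
  split_ifs <;> simp

/-- The `(k, j)` term of the double series of `e^{tw} (1 - 1/w)^{-p} w^{-n-1}`: `k` indexes the
binomial series, `j` the exponential series. -/
noncomputable def schuetzTerm (p : ℕ) (n : ℤ) (t : ℂ) (q : ℕ × ℕ) (w : ℂ) : ℂ :=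
  ((q.1 + p - 1).choose (p - 1) : ℂ) * (t ^ q.2 / q.2.factorial) * w ^ ((q.2 : ℤ) - q.1 - n - 1)

section SchuetzTerm

variable {p : ℕ} {n : ℤ} {t w : ℂ}

theorem schuetzTerm_eq_mul (hp : 1 ≤ p) (hw : w ≠ 0) (q : ℕ × ℕ) :
    schuetzTerm p n t q w =
      ((q.1 + (p - 1)).choose (p - 1) * w⁻¹ ^ q.1) * ((t * w) ^ q.2 / q.2.factorial) *
        w ^ (-n - 1) := by
  rw [schuetzTerm, ← Nat.add_sub_assoc hp, mul_pow, inv_pow, ← zpow_natCast w q.2,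
    ← zpow_natCast w q.1, show (q.2 : ℤ) - q.1 - n - 1 = q.2 + (-n - 1) - q.1 by ring,
    zpow_sub₀ hw, zpow_add₀ hw]
  ring

theorem hasSum_schuetzTerm (hp : 1 ≤ p) (hw : 1 < ‖w‖) :
    HasSum (fun q => schuetzTerm p n t q w) (exp (t * w) * ((1 - w⁻¹) ^ p)⁻¹ * w ^ (-n - 1)) := by
  have hw0 : w ≠ 0 := norm_pos_iff.1 (one_pos.trans hw)
  have hu := hasSum_choose_mul_geometric_of_norm_lt_one (p - 1)
    (norm_inv w ▸ inv_lt_one_of_one_lt₀ hw)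
  have hv : HasSum (fun j : ℕ => (t * w) ^ j / (j.factorial : ℂ)) (exp (t * w)) := by
    rw [exp_eq_exp_ℂ]; exact NormedSpace.expSeries_div_hasSum_exp (t * w)
  have hu' := summable_norm_iff.2 hu.summable
  have hv' := summable_norm_iff.2 hv.summable
  have hs := summable_mul_of_summable_norm hu' hv'
  have huv := hu.mul hv hs
  rw [Nat.sub_add_cancel hp, one_div] at huv
  simpa only [schuetzTerm_eq_mul hp hw0, mul_comm (exp _)] using huv.mul_right (w ^ (-n - 1))

theorem norm_schuetzTerm_congr {w' : ℂ} (h : ‖w‖ = ‖w'‖) (q : ℕ × ℕ) :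
    ‖schuetzTerm p n t q w‖ = ‖schuetzTerm p n t q w'‖ := by
  simp only [schuetzTerm, norm_mul, norm_zpow, h]

theorem circleIntegral_schuetzTerm {R : ℝ} (hR : R ≠ 0) (q : ℕ × ℕ) :
    (∮ w in C(0, R), schuetzTerm p n t q w) =
      if (q.2 : ℤ) = q.1 + n then
        2 * Real.pi * I * (((q.1 + p - 1).choose (p - 1) : ℂ) * (t ^ q.2 / q.2.factorial))
      else 0 := by
  simp only [schuetzTerm, circleIntegral.integral_const_mul, circleIntegral_zpow hR,
    show (q.2 : ℤ) - q.1 - n - 1 = -1 ↔ (q.2 : ℤ) = q.1 + n by omega]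
  split_ifs <;> ring

end SchuetzTerm

theorem hasSum_two_pi_I_mul_schuetzCoeff {p : ℕ} (hp : 1 ≤ p) (n : ℤ) (t : ℂ) {R : ℝ}
    (hR : 1 < R) :
    HasSum (fun k => 2 * Real.pi * I * schuetzCoeff p n t k)
      (∮ w in C(0, R), exp (t * w) * ((1 - w⁻¹) ^ p)⁻¹ * w ^ (-n - 1)) := by
  have hR0 : 0 < R := one_pos.trans hR
  have hsphere : ∀ w ∈ sphere (0 : ℂ) |R|, 1 < ‖w‖ := fun w hw => by
    rwa [mem_sphere_zero_iff_norm.1 hw, abs_of_pos hR0]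
  have h := circleIntegral.hasSum_integral_of_norm_le
    (F := schuetzTerm p n t) (M := fun q => ‖schuetzTerm p n t q R‖)
    (f := fun w => exp (t * w) * ((1 - w⁻¹) ^ p)⁻¹ * w ^ (-n - 1))
    (fun q => ContinuousOn.circleIntegrable hR0.le <| continuousOn_const.mul <|
      continuousOn_id.zpow₀ _ fun w hw => Or.inl (ne_zero_of_mem_sphere hR0.ne' ⟨w, hw⟩))
    (summable_norm_iff.2 (hasSum_schuetzTerm hp (by simpa [abs_of_pos hR0])).summable)
    (fun q w hw => (norm_schuetzTerm_congr (by simp [mem_sphere_zero_iff_norm.1 hw]) q).le)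
    (fun w hw => hasSum_schuetzTerm hp (hsphere w hw))
  rw [← (Function.Injective.hasSum_iff (g := fun k : ℕ => (k, ((k : ℤ) + n).toNat))
    (fun k l h => congrArg Prod.fst h) ?_)] at h
  · refine (funext fun k => ?_ : _ = fun k => 2 * Real.pi * I * schuetzCoeff p n t k) ▸ h
    rw [Function.comp_apply, circleIntegral_schuetzTerm hR0.ne', schuetzCoeff]
    simp only [Int.natCast_toNat_eq_self, mul_div_assoc, mul_ite, mul_zero]
  · rintro q hq
    rw [circleIntegral_schuetzTerm hR0.ne', if_neg]
    exact fun h => hq ⟨q.1, Prod.ext rfl (by simp; omega)⟩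

theorem exp_mul_sub_one_mul_zpow_eq {w : ℂ} (hw : w ≠ 0) (p : ℕ) (n : ℤ) (t : ℂ) :
    exp (t * (w - 1)) * (w - 1) ^ (-(p : ℤ)) * w ^ (-(n - (p : ℤ) + 1)) =
      exp (-t) * (exp (t * w) * ((1 - w⁻¹) ^ p)⁻¹ * w ^ (-n - 1)) := by
  rw [show 1 - w⁻¹ = (w - 1) * w⁻¹ by field_simp, mul_pow, mul_inv, inv_pow, inv_inv,
    show -(n - (p : ℤ) + 1) = -n - 1 + p by ring, zpow_add₀ hw, zpow_neg, zpow_natCast,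
    zpow_natCast, mul_sub, mul_one, sub_eq_add_neg, exp_add]
  ring

/-- For an integer `p ≥ 1`, `n ∈ ℤ`, `t ∈ ℝ` and `R > 1`,
`(1/2πi) ∮_{|w|=R} e^{t(w−1)} (w−1)^{−p} w^{−(n−p+1)} dw
  = e^{−t} ∑_{k=0}^∞ binom(k+p−1, p−1) · t^{k+n}/(k+n)!`,
where terms with `k+n < 0` are `0`, and the series converges absolutely. -/
theorem stmt_9 (p : ℕ) (hp : 1 ≤ p) (n : ℤ) (t : ℝ) (R : ℝ) (hR : 1 < R) :
    Summable (fun k : ℕ =>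
      |if 0 ≤ (k : ℤ) + n then
          ((k + p - 1).choose (p - 1) : ℝ) * t ^ ((k : ℤ) + n).toNat /
            (((k : ℤ) + n).toNat.factorial : ℝ)
        else 0|) ∧
    (2 * Real.pi * Complex.I)⁻¹ *
        (∮ w in C(0, R),
          Complex.exp (t * (w - 1)) * (w - 1) ^ (-(p : ℤ)) * w ^ (-(n - (p : ℤ) + 1))) =
      Complex.ofReal (Real.exp (-t) *
        ∑' k : ℕ,
          if 0 ≤ (k : ℤ) + n then
            ((k + p - 1).choose (p - 1) : ℝ) * t ^ ((k : ℤ) + n).toNat /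
              (((k : ℤ) + n).toNat.factorial : ℝ)
          else 0) := by
  have hR0 : 0 < R := one_pos.trans hR
  have hcoeff : HasSum (fun k => ((schuetzCoeff p n t k : ℝ) : ℂ))
      ((2 * Real.pi * I)⁻¹ *
        ∮ w in C(0, R), exp (t * w) * ((1 - w⁻¹) ^ p)⁻¹ * w ^ (-n - 1)) := by
    have h2πI : (2 * Real.pi * I : ℂ) ≠ 0 := by simp [Real.pi_ne_zero]
    have h := (hasSum_two_pi_I_mul_schuetzCoeff hp n t hR).mul_left (2 * Real.pi * I)⁻¹
    simp only [inv_mul_cancel_left₀ h2πI] at h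
    simpa only [← ofRealHom_eq_coe, ← map_schuetzCoeff] using h
  have hkernel : (∮ w in C(0, R),
      exp (t * (w - 1)) * (w - 1) ^ (-(p : ℤ)) * w ^ (-(n - (p : ℤ) + 1))) =
      exp (-t) * ∮ w in C(0, R), exp (t * w) * ((1 - w⁻¹) ^ p)⁻¹ * w ^ (-n - 1) := by
    rw [← circleIntegral.integral_const_mul]
    exact circleIntegral.integral_congr hR0.le fun w hw =>
      exp_mul_sub_one_mul_zpow_eq (ne_zero_of_mem_sphere hR0.ne' ⟨w, hw⟩) p n t
  refine ⟨?_, ?_⟩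
  · show Summable fun k : ℕ => |schuetzCoeff p n t k|
    simpa only [norm_real, Real.norm_eq_abs] using summable_norm_iff.2 hcoeff.summable
  · change _ = ((Real.exp (-t) * ∑' k, schuetzCoeff p n t k : ℝ) : ℂ)
    rw [hkernel, ofReal_mul, ofReal_tsum, hcoeff.tsum_eq, ofReal_exp, ofReal_neg]
    ring
end

section
/- Let p ≤ 0 be an integer, n ∈ ℤ, t ∈ ℝ, and R > 0. Then (1/2πi) ∮_{|w|=R} e^{t(w−1)} (w−1)^{−p} w^{−(n−p+1)} dw = e^{−t} ∑_{k=0}^{−p} (−1)^k binom(−p, k) · t^{k+n}/(k+n)!, where terms with k + n < 0 are interpreted as 0. -/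
/-!
Expanding `(w - 1)^(-p)` binomially turns the integrand into a combination of
`exp (t w) * w^(-(k + n + 1))`. By Cauchy's formula for derivatives at the origin each of these
integrates to `2πi t^(k+n) / (k+n)!` when `k + n ≥ 0`; when `k + n < 0` the integrand is entire
and its integral vanishes.
-/

open Complex Metric Finset

namespace Differentiable

variable {f : ℂ → ℂ} {R : ℝ}

lemma circleIntegral_mul_zpow_natCast (hf : Differentiable ℂ f) (hR : 0 ≤ R) (j : ℕ) :
    (∮ w in C(0, R), f w * w ^ (j : ℤ)) = 0 := by
  simp only [zpow_natCast]
  exact (hf.mul (differentiable_pow j)).diffContOnCl.circleIntegral_eq_zero hR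

lemma circleIntegral_mul_zpow_neg_natCast_succ (hf : Differentiable ℂ f) (hR : 0 < R) (j : ℕ) :
    (2 * Real.pi * I)⁻¹ * (∮ w in C(0, R), f w * w ^ (-((j : ℤ) + 1))) =
      iteratedDeriv j f 0 / j.factorial := by
  have cauchy := hf.differentiableOn.circleIntegral_one_div_sub_center_pow_smul hR j (c := 0)
  simp only [sub_zero, smul_eq_mul] at cauchy
  have integrand : (fun w => f w * w ^ (-((j : ℤ) + 1))) = fun w => 1 / w ^ (j + 1) * f w := by
    funext w
    rw [← Nat.cast_succ, zpow_neg, zpow_natCast, one_div, mul_comm]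
  rw [integrand, cauchy]
  field_simp

lemma circleIntegral_mul_zpow_neg_succ (hf : Differentiable ℂ f) (hR : 0 < R) (j : ℤ) :
    (2 * Real.pi * I)⁻¹ * (∮ w in C(0, R), f w * w ^ (-(j + 1))) =
      if 0 ≤ j then iteratedDeriv j.toNat f 0 / j.toNat.factorial else 0 := by
  split_ifs with hj
  · lift j to ℕ using hj
    simpa using hf.circleIntegral_mul_zpow_neg_natCast_succ hR j
  · obtain ⟨i, hi⟩ : ∃ i : ℕ, -(j + 1) = i := ⟨(-(j + 1)).toNat, by omega⟩
    rw [hi, hf.circleIntegral_mul_zpow_natCast hR.le, mul_zero]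

end Differentiable

lemma circleIntegral_cexp_mul_zpow_neg_succ (c : ℂ) {R : ℝ} (hR : 0 < R) (j : ℤ) :
    (2 * Real.pi * I)⁻¹ * (∮ w in C(0, R), exp (c * w) * w ^ (-(j + 1))) =
      if 0 ≤ j then c ^ j.toNat / j.toNat.factorial else 0 := by
  rw [Differentiable.circleIntegral_mul_zpow_neg_succ (by fun_prop) hR,
    iteratedDeriv_cexp_const_mul]
  simp

lemma cexp_mul_sub_one_mul_pow_mul_zpow (c : ℂ) {w : ℂ} (hw : w ≠ 0) (m : ℕ) (n : ℤ) :
    exp (c * (w - 1)) * (w - 1) ^ m * w ^ (-(n + m + 1)) =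
      exp (-c) * ∑ k ∈ range (m + 1),
        (-1) ^ k * (m.choose k : ℂ) * (exp (c * w) * w ^ (-((k : ℤ) + n + 1))) := by
  rw [show c * (w - 1) = c * w + -c by ring, exp_add, sub_eq_neg_add w, add_pow, mul_sum, sum_mul,
    mul_sum]
  refine sum_congr rfl fun k hk => ?_
  have hkm : k ≤ m := mem_range_succ_iff.mp hk
  have hpow : w ^ (m - k) * w ^ (-(n + m + 1)) = w ^ (-((k : ℤ) + n + 1)) := by
    rw [← zpow_natCast, ← zpow_add₀ hw]
    congr 1
    omega
  rw [← hpow]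
  ring

lemma circleIntegrable_const_mul_cexp_mul_zpow (a c : ℂ) (e : ℤ) {R : ℝ} (hR : 0 < R) :
    CircleIntegrable (fun w => a * (exp (c * w) * w ^ e)) 0 R := by
  have hw : ∀ w ∈ sphere (0 : ℂ) R, w ≠ 0 := fun w hw => ne_of_mem_sphere hw hR.ne'
  exact ContinuousOn.circleIntegrable hR.le (by fun_prop (disch := grind))

/-- For an integer `p ≤ 0`, `n ∈ ℤ`, `t ∈ ℝ` and `R > 0`,
`(1/2πi) ∮_{|w|=R} e^{t(w−1)} (w−1)^{−p} w^{−(n−p+1)} dw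
  = e^{−t} ∑_{k=0}^{−p} (−1)^k binom(−p, k) · t^{k+n}/(k+n)!`,
where terms with `k+n < 0` are `0`. -/
theorem stmt_10 (p : ℤ) (hp : p ≤ 0) (n : ℤ) (t : ℝ) (R : ℝ) (hR : 0 < R) :
    (2 * Real.pi * Complex.I)⁻¹ *
        (∮ w in C(0, R),
          Complex.exp (t * (w - 1)) * (w - 1) ^ (-p) * w ^ (-(n - p + 1))) =
      Complex.ofReal (Real.exp (-t) *
        ∑ k ∈ Finset.range ((-p).toNat + 1),
          (-1 : ℝ) ^ k *
            ((-p).toNat.choose k : ℝ) *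
            (if 0 ≤ (k : ℤ) + n then
              t ^ ((k : ℤ) + n).toNat / ((((k : ℤ) + n).toNat.factorial : ℝ))
            else 0)) := by
  obtain ⟨m, rfl⟩ : ∃ m : ℕ, p = -m := ⟨(-p).toNat, by omega⟩
  have expand : Set.EqOn
      (fun w => exp (t * (w - 1)) * (w - 1) ^ (-(-m : ℤ)) * w ^ (-(n - -m + 1)))
      (fun w => exp (-t) * ∑ k ∈ range (m + 1),
        (-1) ^ k * (m.choose k : ℂ) * (exp (t * w) * w ^ (-((k : ℤ) + n + 1))))
      (sphere 0 R) := fun w hw => by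
    simpa [sub_neg_eq_add] using
      cexp_mul_sub_one_mul_pow_mul_zpow (t : ℂ) (ne_of_mem_sphere hw hR.ne') m n
  rw [circleIntegral.integral_congr hR.le expand, circleIntegral.integral_const_mul,
    circleIntegral.integral_fun_sum fun k _ =>
      circleIntegrable_const_mul_cexp_mul_zpow _ _ _ hR]
  simp only [circleIntegral.integral_const_mul, mul_sum, mul_left_comm (2 * Real.pi * I)⁻¹,
    circleIntegral_cexp_mul_zpow_neg_succ _ hR]
  push_cast [apply_ite]
  simp
end

section
/- For p, n ∈ ℤ and t ∈ ℝ define F_p(n; t) = (1/2πi) ∮_{|w|=R} e^{t(w−1)} (w−1)^{−p} w^{−(n−p+1)} dw for any fixed R > 1 (the value is independent of such R). Then for every integer p ≤ −1, every n ∈ ℤ and every t ∈ ℝ, F_{p+1}(n; t) = − ∑_{m < n} F_p(m; t), where the sum over integers m < n has only finitely many nonzero terms (F_p(m; t) = 0 for m < p). -/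
/-!
On the circle `|w| = R > 1` the integrands `f_p(m)` of `F_p(m)` satisfy the pointwise identity
`f_p(m) = f_{p+1}(m) - f_{p+1}(m + 1)`, because `(w - 1) w^{-(m-p+1)} = w^{-(m-p)} - w^{-(m-p+1)}`;
hence `F_p(m) = F_{p+1}(m) - F_{p+1}(m + 1)` for all `p, m`. For `q ≤ 0` and `m < q` both exponents
are nonnegative, the integrand is entire and `F_q(m) = 0` by Cauchy. Since `p + 1 ≤ 0`, the sum over
`m < n` telescopes to `-F_{p+1}(n)`.
-/

open Complex Metric

theorem Int.sum_Ico_sub_add_one {M : Type*} [AddCommGroup M] (g : ℤ → M) {a b : ℤ}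
    (hab : a ≤ b) : ∑ m ∈ Finset.Ico a b, (g m - g (m + 1)) = g a - g b := by
  induction b, hab using Int.leInduction with
  | base => simp
  | succ b hab ih =>
    rw [Finset.Ico_add_one_right_eq_Icc, ← Finset.Ico_insert_right hab,
      Finset.sum_insert Finset.right_notMem_Ico, ih]
    abel

theorem Int.tsum_lt_sub_add_one {M : Type*} [AddCommGroup M] [TopologicalSpace M] [T2Space M]
    (g : ℤ → M) {a : ℤ} (hg : ∀ m ≤ a, g m = 0) (n : ℤ) :
    ∑' m : {m : ℤ // m < n}, (g m - g (m + 1)) = -g n := by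
  set f : ℤ → M := fun m => g m - g (m + 1)
  have hsupp : ∀ m ∉ Finset.Ico (min a n) n, Set.indicator {m | m < n} f m = 0 := by
    intro m hm
    by_cases hmn : m < n
    · have hma : m + 1 ≤ a := by simp only [Finset.mem_Ico, not_and, not_lt] at hm; omega
      simp [Set.indicator_of_mem (show m ∈ {m : ℤ | m < n} from hmn), f, hg m (by omega), hg _ hma]
    · exact Set.indicator_of_notMem (show m ∉ {m : ℤ | m < n} from hmn) f
  calc ∑' m : {m : ℤ // m < n}, f m
      = ∑ m ∈ Finset.Ico (min a n) n, Set.indicator {m | m < n} f m :=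
        (tsum_subtype {m : ℤ | m < n} f).trans (tsum_eq_sum hsupp)
    _ = ∑ m ∈ Finset.Ico (min a n) n, f m :=
        Finset.sum_congr rfl fun m hm =>
          Set.indicator_of_mem (show m ∈ {m : ℤ | m < n} from (Finset.mem_Ico.mp hm).2) f
    _ = -g n := by
        rw [Int.sum_Ico_sub_add_one g (min_le_right a n), hg _ (min_le_left a n), zero_sub]

noncomputable def schutzIntegrand (t : ℝ) (p n : ℤ) (w : ℂ) : ℂ :=
  exp (t * (w - 1)) * (w - 1) ^ (-p) * w ^ (-(n - p + 1))

theorem schutzIntegrand_eq_sub (t : ℝ) (p m : ℤ) {w : ℂ} (hw0 : w ≠ 0) (hw1 : w ≠ 1) :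
    schutzIntegrand t p m w =
      schutzIntegrand t (p + 1) m w - schutzIntegrand t (p + 1) (m + 1) w := by
  have hw1' : w - 1 ≠ 0 := sub_ne_zero.mpr hw1
  have hexp₁ : (w - 1) ^ (-p) = (w - 1) ^ (-(p + 1)) * (w - 1) := by
    rw [← zpow_add_one₀ hw1']; ring_nf
  have hexp₂ : w ^ (-(m - (p + 1) + 1)) = w ^ (-(m + 1 - (p + 1) + 1)) * w := by
    rw [← zpow_add_one₀ hw0]; ring_nf
  simp only [schutzIntegrand, hexp₁, hexp₂, show -(m - p + 1) = -(m + 1 - (p + 1) + 1) by ring]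
  ring

theorem differentiable_schutzIntegrand (t : ℝ) {p n : ℤ} (hp : p ≤ 0) (hn : n < p) :
    Differentiable ℂ (schutzIntegrand t p n) := fun w =>
  ((by fun_prop : DifferentiableAt ℂ (fun w : ℂ => exp (t * (w - 1))) w).mul
    ((differentiableAt_id.sub_const 1).zpow (Or.inr (by omega)))).mul
    (differentiableAt_id.zpow (Or.inr (by omega)))

theorem ne_one_of_mem_sphere_zero {w : ℂ} {R : ℝ} (hw : w ∈ sphere (0 : ℂ) R) (hR : R ≠ 1) :
    w ≠ 1 := by
  rintro rfl
  simp [hR.symm] at hw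

theorem circleIntegrable_schutzIntegrand (t : ℝ) (p n : ℤ) {R : ℝ} (hR0 : 0 < R)
    (hR1 : R ≠ 1) : CircleIntegrable (schutzIntegrand t p n) 0 R := by
  refine ContinuousOn.circleIntegrable hR0.le fun w hw => ?_
  have hw1 : w - 1 ≠ 0 := sub_ne_zero.mpr (ne_one_of_mem_sphere_zero hw hR1)
  exact (((continuous_exp.comp (by fun_prop)).continuousAt.mul
    ((continuousAt_id.sub continuousAt_const).zpow₀ _ (Or.inl hw1))).mul
    (continuousAt_zpow₀ w _ (Or.inl (ne_of_mem_sphere hw hR0.ne')))).continuousWithinAt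

theorem circleIntegral_schutzIntegrand_eq_zero (t : ℝ) {p n : ℤ} (hp : p ≤ 0) (hn : n < p)
    (c : ℂ) {R : ℝ} (hR : 0 ≤ R) : (∮ w in C(c, R), schutzIntegrand t p n w) = 0 :=
  (differentiable_schutzIntegrand t hp hn).diffContOnCl.circleIntegral_eq_zero hR

theorem circleIntegral_schutzIntegrand_eq_sub (t : ℝ) (p m : ℤ) {R : ℝ} (hR0 : 0 < R)
    (hR1 : R ≠ 1) :
    (∮ w in C(0, R), schutzIntegrand t p m w) =
      (∮ w in C(0, R), schutzIntegrand t (p + 1) m w) -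
        ∮ w in C(0, R), schutzIntegrand t (p + 1) (m + 1) w := by
  rw [← circleIntegral.integral_sub (circleIntegrable_schutzIntegrand t _ _ hR0 hR1)
    (circleIntegrable_schutzIntegrand t _ _ hR0 hR1)]
  exact circleIntegral.integral_congr hR0.le fun w hw =>
    schutzIntegrand_eq_sub t p m (ne_of_mem_sphere hw hR0.ne') (ne_one_of_mem_sphere_zero hw hR1)

/-- Let `F p n` (for fixed `t ∈ ℝ`) be given by the contour integral
`F_p(n; t) = (1/2πi) ∮_{|w|=R} e^{t(w−1)} (w−1)^{−p} w^{−(n−p+1)} dw` for every `R > 1`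
(the value being independent of such `R`). Then for every integer `p ≤ −1`, every `n ∈ ℤ`
and every `t`, `F_p(m; t) = 0` for `m < p` (so the sum below has finitely many nonzero
terms) and `F_{p+1}(n; t) = − ∑_{m < n} F_p(m; t)`. -/
theorem stmt_12 (t : ℝ) (F : ℤ → ℤ → ℂ)
    (hF : ∀ p n : ℤ, ∀ R : ℝ, 1 < R →
      F p n = (2 * Real.pi * Complex.I)⁻¹ *
        ∮ w in C(0, R), Complex.exp (t * (w - 1)) * (w - 1) ^ (-p) * w ^ (-(n - p + 1)))
    (p : ℤ) (hp : p ≤ -1) (n : ℤ) :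
    (∀ m : ℤ, m < p → F p m = 0) ∧
      F (p + 1) n = - ∑' m : {m : ℤ // m < n}, F p (m : ℤ) := by
  have hF₂ : ∀ q m : ℤ, F q m = (2 * Real.pi * I)⁻¹ * ∮ w in C(0, 2), schutzIntegrand t q m w :=
    fun q m => hF q m 2 one_lt_two
  have hvanish : ∀ q m : ℤ, q ≤ 0 → m < q → F q m = 0 := fun q m hq hm => by
    rw [hF₂, circleIntegral_schutzIntegrand_eq_zero t hq hm 0 zero_le_two, mul_zero]
  have hstep : ∀ m : ℤ, F p m = F (p + 1) m - F (p + 1) (m + 1) := fun m => by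
    rw [hF₂, hF₂, hF₂, circleIntegral_schutzIntegrand_eq_sub t p m two_pos (by norm_num), mul_sub]
  refine ⟨fun m hm => hvanish p m (by omega) hm, ?_⟩
  rw [tsum_congr fun m : {m : ℤ // m < n} => hstep m,
    Int.tsum_lt_sub_add_one (F (p + 1)) (a := p) (fun m hm => hvanish (p + 1) m (by omega) (by omega)),
    neg_neg]
end

section
/- Let t > 0, let q ≥ 1 be an integer and n ∈ ℤ. For integers M ≥ 2 define S_M = (1 − 1/M)^{⌊Mt⌋} · ∑_{l=0}^{∞} binom(l+q−1, q−1) · b(⌊Mt⌋, n+l) · (M−1)^{−(n+l)}, where b(K, m) = binom(K, m) if 0 ≤ m ≤ K and b(K, m) = 0 otherwise (so for each M only finitely many terms are nonzero). Then the series ∑_{l=0}^{∞} binom(l+q−1, q−1) · τ_t(n+l) converges, where τ_t(m) = t^m/m! for m ≥ 0 and τ_t(m) = 0 for m < 0, and lim_{M→∞} S_M = e^{−t} ∑_{l=0}^{∞} binom(l+q−1, q−1) · τ_t(n+l). -/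
/-!
Write `K = ⌊M t⌋` and `x = M - 1`, so that `K / x → t`. For fixed `m ≥ 0`,
`binom(K, m) / x^m = (1/m!) ∏_{j<m} (K/x - j/x) → t^m / m!`, and the bound
`binom(K, m) ≤ K^m / m!` dominates the `l`-th term of the series by
`binom(l+q-1, q-1) τ_{2t}(n+l)` once `K / x ≤ 2t`. That majorant is summable because
`binom(l+q-1, q-1) ≤ 2^(q+l)` and `2^l τ_u(n+l) = 2^(-n) τ_{2u}(n+l)`, so Tannery's theorem
gives the limit of the series, while `(1 - 1/M)^K = exp (K log (1 - 1/M)) → e^{-t}`.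
-/

open Filter Topology Nat

/-- `b(K, m) = binom(K, m)` if `0 ≤ m ≤ K`, else `0` (for `K : ℕ`, `m : ℤ`). -/
noncomputable def binomExt (K : ℕ) (m : ℤ) : ℝ :=
  if 0 ≤ m ∧ m ≤ K then (K.choose m.toNat : ℝ) else 0

/-- `τ_t(m) = t^m / m!` for `m ≥ 0` and `0` for `m < 0`. -/
noncomputable def poissonWeight (t : ℝ) (m : ℤ) : ℝ :=
  if 0 ≤ m then t ^ m.toNat / (m.toNat.factorial : ℝ) else 0

lemma binomExt_natCast (K s : ℕ) : binomExt K s = K.choose s := by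
  unfold binomExt
  split_ifs with h
  · simp
  · rw [Nat.choose_eq_zero_of_lt (by omega), Nat.cast_zero]

lemma binomExt_of_neg (K : ℕ) {m : ℤ} (hm : m < 0) : binomExt K m = 0 :=
  if_neg (by omega)

lemma binomExt_nonneg (K : ℕ) (m : ℤ) : 0 ≤ binomExt K m := by
  unfold binomExt
  split_ifs <;> positivity

lemma poissonWeight_natCast (u : ℝ) (s : ℕ) : poissonWeight u s = u ^ s / s ! := by
  simp [poissonWeight]

lemma poissonWeight_of_neg (u : ℝ) {m : ℤ} (hm : m < 0) : poissonWeight u m = 0 :=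
  if_neg (by omega)

lemma poissonWeight_nonneg {u : ℝ} (hu : 0 ≤ u) (m : ℤ) : 0 ≤ poissonWeight u m := by
  unfold poissonWeight
  split_ifs <;> positivity

lemma poissonWeight_mono {u v : ℝ} (hu : 0 ≤ u) (huv : u ≤ v) (m : ℤ) :
    poissonWeight u m ≤ poissonWeight v m := by
  unfold poissonWeight
  split_ifs
  · gcongr
  · rfl

lemma binomExt_mul_zpow_neg_le (K : ℕ) (m : ℤ) {x : ℝ} (hx : 0 < x) :
    binomExt K m * x ^ (-m) ≤ poissonWeight (K / x) m := by
  rcases lt_or_ge m 0 with hm | hm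
  · simp [binomExt_of_neg K hm, poissonWeight_of_neg _ hm]
  lift m to ℕ using hm
  rw [binomExt_natCast, poissonWeight_natCast, zpow_neg, zpow_natCast, div_pow]
  calc (K.choose m : ℝ) * (x ^ m)⁻¹ ≤ (K ^ m / m !) * (x ^ m)⁻¹ := by
        gcongr
        exact Nat.choose_le_pow_div m K
    _ = K ^ m / x ^ m / m ! := by ring

lemma summable_poissonWeight_add (u : ℝ) (n : ℤ) :
    Summable fun l : ℕ => poissonWeight u (n + l) := by
  rw [← summable_nat_add_iff (-n).toNat]
  have hshift : ∀ k : ℕ, n + ((k + (-n).toNat : ℕ) : ℤ) = ((k + n.toNat : ℕ) : ℤ) := fun k => by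
    push_cast
    omega
  simp_rw [hshift, poissonWeight_natCast]
  exact (summable_nat_add_iff n.toNat).mpr (Real.summable_pow_div_factorial u)

lemma two_pow_mul_poissonWeight_add (u : ℝ) (n : ℤ) (l : ℕ) :
    2 ^ l * poissonWeight u (n + l) = (2 : ℝ) ^ (-n) * poissonWeight (2 * u) (n + l) := by
  rcases lt_or_ge (n + l) 0 with hm | hm
  · simp [poissonWeight_of_neg _ hm]
  obtain ⟨s, hs⟩ := Int.eq_ofNat_of_zero_le hm
  have h2 : (2 : ℝ) ^ (-n) * 2 ^ s = 2 ^ l := by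
    rw [← zpow_natCast, ← zpow_natCast, ← zpow_add₀ two_ne_zero]
    congr 1
    omega
  rw [hs, poissonWeight_natCast, poissonWeight_natCast, mul_pow, ← h2]
  ring

lemma summable_choose_mul_poissonWeight {u : ℝ} (hu : 0 ≤ u) (q : ℕ) (n : ℤ) :
    Summable fun l : ℕ => ((l + q - 1).choose (q - 1) : ℝ) * poissonWeight u (n + l) := by
  refine Summable.of_nonneg_of_le (fun l => mul_nonneg (Nat.cast_nonneg _)
    (poissonWeight_nonneg hu _)) (fun l => ?_)
    (((summable_poissonWeight_add (2 * u) n).mul_left ((2 : ℝ) ^ (-n))).mul_left (2 ^ q))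
  have hchoose : ((l + q - 1).choose (q - 1) : ℝ) ≤ 2 ^ q * 2 ^ l := by
    rw [← pow_add]
    exact_mod_cast (Nat.choose_le_two_pow _ _).trans (Nat.pow_le_pow_right two_pos (by omega))
  calc ((l + q - 1).choose (q - 1) : ℝ) * poissonWeight u (n + l)
      ≤ 2 ^ q * 2 ^ l * poissonWeight u (n + l) := by
        gcongr
        exact poissonWeight_nonneg hu _
    _ = 2 ^ q * (2 ^ (-n) * poissonWeight (2 * u) (n + l)) := by
        rw [mul_assoc, two_pow_mul_poissonWeight_add]

section Limits

variable {α : Type*} {f : Filter α} {K : α → ℕ} {x : α → ℝ} {t : ℝ}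

lemma tendsto_choose_div_pow (hx : Tendsto x f atTop)
    (hK : Tendsto (fun a => K a / x a) f (𝓝 t)) (s : ℕ) :
    Tendsto (fun a => ((K a).choose s : ℝ) / x a ^ s) f (𝓝 (t ^ s / s !)) := by
  have hfactor : ∀ j ∈ Finset.range s,
      Tendsto (fun a => K a / x a - j * (x a)⁻¹) f (𝓝 t) := fun j _ => by
    simpa using hK.sub ((tendsto_inv_atTop_zero.comp hx).const_mul (j : ℝ))
  have hprod := (tendsto_finsetProd _ hfactor).div_const (s ! : ℝ)
  rw [Finset.prod_const, Finset.card_range] at hprod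
  refine hprod.congr' ?_
  filter_upwards [hx.eventually_ne_atTop 0] with a ha
  have hdiv : ∀ j : ℕ, (K a : ℝ) / x a - j * (x a)⁻¹ = (K a - j) / x a := fun j => by ring
  simp_rw [hdiv, Finset.prod_div_distrib, Finset.prod_const, Finset.card_range,
    Nat.cast_choose_eq_descPochhammer_div, descPochhammer_eval_eq_prod_range, div_right_comm]

lemma tendsto_binomExt_mul_zpow_neg (hx : Tendsto x f atTop)
    (hK : Tendsto (fun a => K a / x a) f (𝓝 t)) (m : ℤ) :
    Tendsto (fun a => binomExt (K a) m * x a ^ (-m)) f (𝓝 (poissonWeight t m)) := by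
  rcases lt_or_ge m 0 with hm | hm
  · simpa [binomExt_of_neg _ hm, poissonWeight_of_neg _ hm] using tendsto_const_nhds
  lift m to ℕ using hm
  simpa [binomExt_natCast, poissonWeight_natCast, div_eq_mul_inv] using
    tendsto_choose_div_pow hx hK m

lemma tendsto_tsum_choose_mul_binomExt (ht : 0 < t) (hx : Tendsto x f atTop)
    (hK : Tendsto (fun a => K a / x a) f (𝓝 t)) (q : ℕ) (n : ℤ) :
    Tendsto (fun a => ∑' l : ℕ, ((l + q - 1).choose (q - 1) : ℝ) * binomExt (K a) (n + l) *
        x a ^ (-(n + (l : ℤ))))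
      f (𝓝 (∑' l : ℕ, ((l + q - 1).choose (q - 1) : ℝ) * poissonWeight t (n + l))) := by
  refine tendsto_tsum_of_dominated_convergence
    (summable_choose_mul_poissonWeight (by positivity : 0 ≤ 2 * t) q n)
    (fun l => by simpa only [mul_assoc] using
      (tendsto_binomExt_mul_zpow_neg hx hK (n + l)).const_mul _) ?_
  filter_upwards [hx.eventually_gt_atTop 0, hK.eventually (gt_mem_nhds (by linarith : t < 2 * t))]
    with a hxa hKa l
  rw [mul_assoc, Real.norm_of_nonneg (by have := binomExt_nonneg (K a) (n + l); positivity)]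
  gcongr
  exact (binomExt_mul_zpow_neg_le _ _ hxa).trans
    (poissonWeight_mono (by positivity) hKa.le _)

end Limits

lemma tendsto_one_add_div_pow_of_tendsto_div {K : ℕ → ℕ} {t : ℝ}
    (hK : Tendsto (fun M : ℕ => (K M : ℝ) / M) atTop (𝓝 t)) (a : ℝ) :
    Tendsto (fun M : ℕ => (1 + a / M) ^ K M) atTop (𝓝 (Real.exp (t * a))) := by
  have hlog :=
    hK.mul ((Real.tendsto_mul_log_one_add_div_atTop a).comp tendsto_natCast_atTop_atTop)
  refine ((Real.continuous_exp.tendsto _).comp hlog).congr' ?_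
  have hpos : ∀ᶠ M : ℕ in atTop, 0 < 1 + a / M := by
    have := (tendsto_const_div_atTop_nhds_zero_nat a).const_add 1
    rw [add_zero] at this
    exact this.eventually (lt_mem_nhds one_pos)
  filter_upwards [hpos, eventually_ne_atTop 0] with M hM hM0
  rw [Function.comp_apply, Function.comp_apply, ← mul_assoc,
    div_mul_cancel₀ _ (by exact_mod_cast hM0), Real.exp_nat_mul, Real.exp_log hM]

lemma tendsto_floor_toNat_mul_div {t : ℝ} (ht : 0 < t) :
    Tendsto (fun M : ℕ => (⌊(M : ℝ) * t⌋.toNat : ℝ) / M) atTop (𝓝 t) := by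
  have h := (tendsto_nat_floor_div_atTop.comp
    (tendsto_natCast_atTop_atTop.atTop_mul_const ht)).mul_const t
  rw [one_mul] at h
  refine h.congr' ?_
  filter_upwards [eventually_ne_atTop 0] with M hM
  rw [Function.comp_apply, Int.floor_toNat]
  field_simp

lemma tendsto_div_natCast_add_of_tendsto_div {g : ℕ → ℝ} {t : ℝ}
    (hg : Tendsto (fun M : ℕ => g M / M) atTop (𝓝 t)) (c : ℝ) :
    Tendsto (fun M : ℕ => g M / (M + c)) atTop (𝓝 t) := by
  have h := hg.mul (tendsto_natCast_div_add_atTop c)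
  rw [mul_one] at h
  refine h.congr' ?_
  filter_upwards [eventually_ne_atTop 0] with M hM
  rw [div_mul_div_cancel₀ (by exact_mod_cast hM)]

theorem stmt_14_general (t : ℝ) (ht : 0 < t) (q : ℕ) (n : ℤ) :
    Summable (fun l : ℕ => ((l + q - 1).choose (q - 1) : ℝ) * poissonWeight t (n + l)) ∧
    Tendsto
      (fun M : ℕ =>
        (1 - 1 / (M : ℝ)) ^ (⌊(M : ℝ) * t⌋.toNat) *
          ∑' l : ℕ,
            ((l + q - 1).choose (q - 1) : ℝ) * binomExt ⌊(M : ℝ) * t⌋.toNat (n + l) *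
              ((M : ℝ) - 1) ^ (-(n + (l : ℤ))))
      atTop
      (𝓝 (Real.exp (-t) *
        ∑' l : ℕ, ((l + q - 1).choose (q - 1) : ℝ) * poissonWeight t (n + l))) := by
  refine ⟨summable_choose_mul_poissonWeight ht.le q n, ?_⟩
  have hK := tendsto_floor_toNat_mul_div ht
  have hK' : Tendsto (fun M : ℕ => (⌊(M : ℝ) * t⌋.toNat : ℝ) / ((M : ℝ) - 1)) atTop (𝓝 t) := by
    simpa only [← sub_eq_add_neg] using tendsto_div_natCast_add_of_tendsto_div hK (-1)
  have hx : Tendsto (fun M : ℕ => (M : ℝ) - 1) atTop atTop :=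
    tendsto_atTop_add_const_right _ _ tendsto_natCast_atTop_atTop
  have hprefactor := tendsto_one_add_div_pow_of_tendsto_div hK (-1)
  rw [mul_neg_one] at hprefactor
  simp_rw [neg_div, ← sub_eq_add_neg] at hprefactor
  exact hprefactor.mul (tendsto_tsum_choose_mul_binomExt ht hx hK' q n)

/-- For `t > 0`, integer `q ≥ 1`, `n ∈ ℤ`, with
`S_M = (1−1/M)^⌊Mt⌋ · ∑_{l=0}^∞ binom(l+q−1, q−1) · b(⌊Mt⌋, n+l) · (M−1)^{−(n+l)}`,
the series `∑_{l≥0} binom(l+q−1, q−1) · τ_t(n+l)` converges and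
`lim_{M→∞} S_M = e^{−t} ∑_{l=0}^∞ binom(l+q−1, q−1) · τ_t(n+l)`. -/
theorem stmt_14 (t : ℝ) (ht : 0 < t) (q : ℕ) (hq : 1 ≤ q) (n : ℤ) :
    Summable (fun l : ℕ => ((l + q - 1).choose (q - 1) : ℝ) * poissonWeight t (n + l)) ∧
    Tendsto
      (fun M : ℕ =>
        (1 - 1 / (M : ℝ)) ^ (⌊(M : ℝ) * t⌋.toNat) *
          ∑' l : ℕ,
            ((l + q - 1).choose (q - 1) : ℝ) * binomExt ⌊(M : ℝ) * t⌋.toNat (n + l) *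
              ((M : ℝ) - 1) ^ (-(n + (l : ℤ))))
      atTop
      (𝓝 (Real.exp (-t) *
        ∑' l : ℕ, ((l + q - 1).choose (q - 1) : ℝ) * poissonWeight t (n + l))) :=
  stmt_14_general t ht q n
end
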